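/- With the setup of the ℤ_4-translation-invariant matrix M above, for all t ≥ 0 and all x, x': Σ_{n ∈ ℤ_4} i^n (e^{tM})((x,0),(x',n)) = (e^{tM̂})(x,x'), where M̂(x,x') = Σ_{k ∈ ℤ_4} A(x,x',k) i^k. -/

import Mathlib

/-!
With `ψ` the character `k ↦ i^k` of `ℤ₄`, let `V((y,n),y') = [y = y'] ψ(n)`. Translation
invariance of `M` and multiplicativity of `ψ` give the intertwining relation `M V = V M̂`, hence
`M^j V = V M̂^j` for all `j` and, summing the exponential series, `e^{tM} V = V e^{tM̂}`. The
`((x,0),x')` entry of the left side is the phase-weighted sum, and that of the right side is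
`ψ(0) e^{tM̂}(x,x') = e^{tM̂}(x,x')`.
-/

open NormedSpace

namespace Matrix

open scoped Norms.Operator in
theorem exp_mul_eq_mul_exp_of_mul_eq {𝕂 ι κ : Type*} [RCLike 𝕂] [Fintype ι] [DecidableEq ι]
    [Fintype κ] [DecidableEq κ] {B : Matrix ι ι 𝕂} {V : Matrix ι κ 𝕂} {C : Matrix κ κ 𝕂}
    (h : B * V = V * C) : exp B * V = V * exp C := by
  have hpow (n : ℕ) : B ^ n * V = V * C ^ n := by
    induction n with
    | zero => simp
    | succ n ih =>
      rw [pow_succ, pow_succ, Matrix.mul_assoc, h, ← Matrix.mul_assoc, ih, Matrix.mul_assoc]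
  have hB : HasSum (fun n : ℕ => ((n.factorial : 𝕂)⁻¹ • B ^ n) * V) (exp B * V) :=
    (exp_series_hasSum_exp' B).map (addMonoidHomMulRight V)
      (continuous_id.matrix_mul continuous_const)
  have hC : HasSum (fun n : ℕ => V * ((n.factorial : 𝕂)⁻¹ • C ^ n)) (V * exp C) :=
    (exp_series_hasSum_exp' C).map (addMonoidHomMulLeft V)
      (continuous_const.matrix_mul continuous_id)
  simp only [Matrix.smul_mul, Matrix.mul_smul, hpow] at hB hC
  exact hB.unique hC

section PhaseLift

variable {G R : Type*} [AddCommGroup G] [CommRing R]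

def phaseLift (X : Type*) [DecidableEq X] (ψ : AddChar G R) : Matrix (X × G) X R :=
  of fun p y => if p.1 = y then ψ p.2 else 0

def phaseSymbol {X : Type*} [Fintype G] (ψ : AddChar G R) (A : X → X → G → R) : Matrix X X R :=
  of fun x x' => ∑ k, A x x' k * ψ k

variable {X : Type*} [Fintype X] [DecidableEq X]

theorem mul_phaseLift_apply [Fintype G] {ι : Type*} (ψ : AddChar G R) (E : Matrix ι (X × G) R)
    (i : ι) (x' : X) : (E * phaseLift X ψ) i x' = ∑ n, E i (x', n) * ψ n := by
  simp [mul_apply, phaseLift, Fintype.sum_prod_type]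

theorem phaseLift_mul_apply {κ : Type*} (ψ : AddChar G R) (F : Matrix X κ R) (x : X) (n : G)
    (y : κ) : (phaseLift X ψ * F) (x, n) y = ψ n * F x y := by
  simp [mul_apply, phaseLift]

theorem mul_phaseLift_eq_phaseLift_mul_phaseSymbol [Fintype G] (ψ : AddChar G R)
    (A : X → X → G → R) (M : Matrix (X × G) (X × G) R)
    (hM : ∀ x x' n n', M (x, n) (x', n') = A x x' (n' - n)) :
    M * phaseLift X ψ = phaseLift X ψ * phaseSymbol ψ A := by
  ext ⟨x, n⟩ x'
  rw [mul_phaseLift_apply, phaseLift_mul_apply, phaseSymbol, of_apply, Finset.mul_sum,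
    ← Equiv.sum_comp (Equiv.addLeft n)]
  refine Finset.sum_congr rfl fun k _ => ?_
  rw [Equiv.coe_addLeft, hM, add_sub_cancel_left, AddChar.map_add_eq_mul]
  ring

end PhaseLift

theorem sum_addChar_mul_exp_apply {𝕂 X G : Type*} [RCLike 𝕂] [Fintype X] [DecidableEq X]
    [Fintype G] [DecidableEq G] [AddCommGroup G] (ψ : AddChar G 𝕂) (A : X → X → G → 𝕂)
    (M : Matrix (X × G) (X × G) 𝕂) (hM : ∀ x x' n n', M (x, n) (x', n') = A x x' (n' - n))
    (x x' : X) : ∑ n, ψ n * exp M (x, 0) (x', n) = exp (phaseSymbol ψ A) x x' := by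
  have hexp := exp_mul_eq_mul_exp_of_mul_eq (mul_phaseLift_eq_phaseLift_mul_phaseSymbol ψ A M hM)
  have hentry := congr_fun (congr_fun hexp (x, 0)) x'
  rw [mul_phaseLift_apply, phaseLift_mul_apply, AddChar.map_zero_eq_one, one_mul] at hentry
  simpa only [mul_comm] using hentry

end Matrix

theorem Finset.sum_mul_ite_eq_add {G R : Type*} [AddCommGroup G] [Fintype G] [DecidableEq G]
    [Semiring R] (f : G → R) (n n' : G) :
    ∑ k, f k * (if n' = n + k then 1 else 0) = f (n' - n) := by
  simp_rw [mul_ite, mul_one, mul_zero, eq_comm (a := n'), ← eq_sub_iff_add_eq',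
    Finset.sum_ite_eq', Finset.mem_univ, if_true]

/-- `ℤ₄` reconstruction formula: for a `ℤ₄`-translation-invariant matrix
`M((x,n),(x',n')) = Σ_{k ∈ ℤ₄} A(x,x',k)·[n' = n+k]` on `X × ℤ₄` (`X` finite), with
`M̂(x,x') = Σ_{k ∈ ℤ₄} A(x,x',k) i^k`, for all `t ≥ 0` and all `x, x'`:
`Σ_{n ∈ ℤ₄} i^n (e^{tM})((x,0),(x',n)) = (e^{tM̂})(x,x')`. -/
theorem zmod4_phase_weighted_kernel
    {X : Type*} [Fintype X] [DecidableEq X]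
    (A : X → X → ZMod 4 → ℂ)
    (M : Matrix (X × ZMod 4) (X × ZMod 4) ℂ)
    (hM : ∀ (x x' : X) (n n' : ZMod 4),
      M (x, n) (x', n') = ∑ k : ZMod 4, A x x' k * (if n' = n + k then 1 else 0)) :
    ∀ t : ℝ, 0 ≤ t → ∀ x x' : X,
      ∑ n : ZMod 4, Complex.I ^ (n.val : ℤ) * NormedSpace.exp (t • M) (x, 0) (x', n)
        = NormedSpace.exp
            (t • (Matrix.of fun x x' : X => ∑ k : ZMod 4, A x x' k * Complex.I ^ (k.val : ℤ)))
            x x' := by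
  intro t _ x x'
  let ψ : AddChar (ZMod 4) ℂ := AddChar.zmodChar 4 Complex.I_pow_four
  have htM : ∀ y y' n n', (t • M) (y, n) (y', n') = t * A y y' (n' - n) := by
    intro y y' n n'
    rw [Matrix.smul_apply, hM, Finset.sum_mul_ite_eq_add, Complex.real_smul]
  have hsymbol : t • (Matrix.of fun x x' : X => ∑ k : ZMod 4, A x x' k * Complex.I ^ (k.val : ℤ))
      = Matrix.phaseSymbol ψ (fun y y' k => t * A y y' k) := by
    ext y y'
    simp only [Matrix.smul_apply, Matrix.of_apply, Matrix.phaseSymbol, ψ,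
      AddChar.zmodChar_apply, zpow_natCast, Finset.smul_sum, Complex.real_smul, mul_assoc]
  rw [hsymbol, ← Matrix.sum_addChar_mul_exp_apply ψ _ (t • M) htM]
  simp only [ψ, AddChar.zmodChar_apply, zpow_natCast]
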